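/- Let S be a function from probability distributions on finite sets to ℝ satisfying: (i) S is continuous on distributions over each fixed finite set; (ii) S(λp ⊕ (1-λ)q) = λS(p) + (1-λ)S(q) + S(λ, 1-λ) for all p, q, λ ∈ [0,1]; (iii) S is invariant under bijections of the underlying set; (iv) S of a point mass is 0; and (v) S(p) ≥ S(f_*p) for every function f. Then there is c ≥ 0 with S(p) = -c ∑_x p_x log p_x for all p. -/

import Mathlib

open Classical in
/-- The pushforward of a distribution `p` on `X` along a function `f : X → Y`. -/
noncomputable def pushfwd {X Y : Type} [Fintype X] (f : X → Y) (p : X → ℝ) : Y → ℝ :=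
  fun y => ∑ x, if f x = y then p x else 0

/-- A probability distribution on a finite set. -/
def IsDist {X : Type} [Fintype X] (p : X → ℝ) : Prop :=
  (∀ x, 0 ≤ p x) ∧ ∑ x, p x = 1

/-! Faddeev's argument. Let `U n` be the value of `S` on the uniform distribution on `n` points
and `H t` its value on `(t, 1 - t)`. Mixing uniform distributions gives
`U (a + b) = a/(a+b) U a + b/(a+b) U b + H (a/(a+b))`, so `U` is completely additive, and as `H` is
continuous with `H 1 = 0`, a Cesàro argument gives `U (n + 1) - U n → 0`. By Erdős' theorem on
additive functions `U n = c log n`, with `c ≥ 0` because pushing forward to a point cannot increase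
`S`. The same identity gives `H = c · binEntropy` at rational points, hence on `[0, 1]` by
continuity, and splitting off one point at a time yields `S p = c ∑ negMulLog (p x)` on every
finite set. -/

open Filter Finset Topology Real

theorem exists_abs_le_add_logb_of_map_two_mul {g : ℕ → ℝ}
    (hg2 : ∀ n, 1 ≤ n → g (2 * n) = g n)
    (hdiff : Tendsto (fun n => g (n + 1) - g n) atTop (𝓝 0)) {ε : ℝ} (hε : 0 < ε) :
    ∃ M, ∀ n, 1 ≤ n → |g n| ≤ M + ε * logb 2 n := by
  obtain ⟨N, hN⟩ := Metric.tendsto_atTop.1 hdiff ε hε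
  refine ⟨∑ n ∈ range (2 * N + 2), |g n|, fun n => ?_⟩
  induction n using Nat.strong_induction_on with
  | _ n ih =>
    intro hn
    by_cases hsmall : n < 2 * N + 2
    · have := single_le_sum (f := fun n => |g n|) (fun _ _ => abs_nonneg _) (mem_range.2 hsmall)
      have := mul_nonneg hε.le (logb_nonneg one_lt_two (by exact_mod_cast hn : (1 : ℝ) ≤ n))
      linarith
    obtain ⟨k, hk⟩ : ∃ k, n / 2 = k := ⟨_, rfl⟩
    have hk1 : 1 ≤ k := by omega
    have hstep : |g n - g k| ≤ ε := by
      rcases Nat.mod_two_eq_zero_or_one n with h | h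
      · rw [show n = 2 * k by omega, hg2 k hk1, sub_self, abs_zero]
        exact hε.le
      · have := hN (2 * k) (by omega)
        rw [Real.dist_eq, sub_zero, hg2 k hk1] at this
        rw [show n = 2 * k + 1 by omega]
        exact this.le
    have hlog : logb 2 k + 1 ≤ logb 2 n := by
      have hpos : (0 : ℝ) < k := by exact_mod_cast hk1
      calc logb 2 k + 1 = logb 2 (2 * k) := by
            rw [logb_mul two_ne_zero hpos.ne', logb_self_eq_one one_lt_two, add_comm]
        _ ≤ logb 2 n := logb_le_logb_of_le one_lt_two (by positivity)
              (by exact_mod_cast (by omega : 2 * k ≤ n))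
    have := ih k (by omega) hk1
    have := abs_sub_abs_le_abs_sub (g n) (g k)
    nlinarith

theorem map_pow_of_map_mul {f : ℕ → ℝ} (hmul : ∀ a b, 1 ≤ a → 1 ≤ b → f (a * b) = f a + f b)
    {m : ℕ} (hm : 1 ≤ m) (k : ℕ) : f (m ^ k) = k * f m := by
  have hf1 : f 1 = 0 := by simpa using hmul 1 1 le_rfl le_rfl
  induction k with
  | zero => simp [hf1]
  | succ k ih =>
    rw [pow_succ, hmul _ _ (Nat.one_le_pow _ _ hm) hm, ih]
    push_cast
    ring

/- Erdős: `g := f - c log` is additive with `g 2 = 0`, so `g n = g (n / 2) + o(1)` and `g` grows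
slower than any multiple of `log`; as `g (n ^ k) = k g n`, this forces `g n = 0`. -/
theorem eq_mul_log_of_map_mul_of_tendsto_sub {f : ℕ → ℝ}
    (hmul : ∀ a b, 1 ≤ a → 1 ≤ b → f (a * b) = f a + f b)
    (hdiff : Tendsto (fun n => f (n + 1) - f n) atTop (𝓝 0)) {n : ℕ} (hn : 1 ≤ n) :
    f n = f 2 / log 2 * log n := by
  set c := f 2 / log 2
  set g : ℕ → ℝ := fun n => f n - c * log n
  have hg2 : ∀ n, 1 ≤ n → g (2 * n) = g n := fun n hn => by
    have : c * log 2 = f 2 := div_mul_cancel₀ _ (log_pos one_lt_two).ne'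
    simp only [g]
    push_cast
    rw [hmul 2 n one_le_two hn, log_mul two_ne_zero (by positivity), mul_add, this]
    ring
  have hgdiff : Tendsto (fun n => g (n + 1) - g n) atTop (𝓝 0) := by
    have := hdiff.sub (tendsto_log_nat_add_one_sub_log.const_mul c)
    simp only [mul_zero, sub_zero] at this
    refine this.congr fun n => ?_
    simp only [g]
    push_cast
    ring
  have hgpow : ∀ k : ℕ, g (n ^ k) = k * g n := fun k => by
    simp only [g]
    rw [map_pow_of_map_mul hmul hn, Nat.cast_pow, log_pow]
    ring
  suffices |g n| ≤ 0 by
    have := abs_nonpos_iff.1 this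
    simp only [g] at this
    linarith
  refine le_of_forall_pos_le_add fun δ hδ => ?_
  set L := logb 2 n
  have hL : 0 ≤ L := logb_nonneg one_lt_two (by exact_mod_cast hn)
  obtain ⟨M, hM⟩ := exists_abs_le_add_logb_of_map_two_mul hg2 hgdiff
    (div_pos hδ (by linarith : (0 : ℝ) < L + 1))
  have hk : ∀ k : ℕ, k * (|g n| - δ / (L + 1) * L) ≤ M := fun k => by
    have := hM (n ^ k) (Nat.one_le_pow _ _ hn)
    rw [hgpow, abs_mul, Nat.abs_cast, Nat.cast_pow, logb_pow] at this
    linarith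
  by_contra! hlt
  have hpos : 0 < |g n| - δ / (L + 1) * L := by
    have : δ / (L + 1) * L ≤ δ := by
      rw [div_mul_eq_mul_div, div_le_iff₀ (by linarith)]
      nlinarith
    linarith
  obtain ⟨k, hk'⟩ := exists_nat_gt (M / (|g n| - δ / (L + 1) * L))
  have := hk k
  rw [div_lt_iff₀ hpos] at hk'
  linarith

theorem tendsto_sub_of_succ_mul_eq {u a : ℕ → ℝ} (ha : Tendsto a atTop (𝓝 0))
    (hrec : ∀ n : ℕ, (n + 1) * u (n + 1) = n * u n + (n + 1) * a n) :
    Tendsto (fun n => u (n + 1) - u n) atTop (𝓝 0) := by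
  have hsum : ∀ n : ℕ, n * u n = ∑ k ∈ range n, (k + 1) * a k := fun n => by
    induction n with
    | zero => simp
    | succ n ih => rw [sum_range_succ, ← ih, Nat.cast_succ, hrec]
  have hbound : ∀ n : ℕ, 1 ≤ n → |u n| ≤ ∑ k ∈ range n, |a k| := fun n hn => by
    have hn' : (0 : ℝ) < n := by exact_mod_cast hn
    refine le_of_mul_le_mul_left ?_ hn'
    calc n * |u n| = |∑ k ∈ range n, (k + 1) * a k| := by
          rw [← hsum, abs_mul, Nat.abs_cast]
      _ ≤ ∑ k ∈ range n, (k + 1) * |a k| := by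
          refine (abs_sum_le_sum_abs _ _).trans (sum_le_sum fun k _ => ?_)
          rw [abs_mul, abs_of_pos (by positivity)]
      _ ≤ ∑ k ∈ range n, n * |a k| := sum_le_sum fun k hk => by
          have : (k : ℝ) + 1 ≤ n := by exact_mod_cast mem_range.1 hk
          gcongr
      _ = n * ∑ k ∈ range n, |a k| := (mul_sum _ _ _).symm
  have hdiv : Tendsto (fun n : ℕ => u n / (n + 1)) atTop (𝓝 0) := by
    refine squeeze_zero_norm' ?_ (by simpa using ha.abs.cesaro)
    filter_upwards [eventually_ge_atTop 1] with n hn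
    rw [norm_div, Real.norm_eq_abs, Real.norm_of_nonneg (by positivity), ← div_eq_inv_mul]
    exact div_le_div₀ (by positivity) (hbound n hn) (by exact_mod_cast hn) (by linarith)
  refine (by simpa using ha.sub hdiv : Tendsto (fun n => a n - u n / (n + 1)) atTop (𝓝 0)).congr
    fun n => ?_
  have := hrec n
  field_simp
  linarith

theorem isDist_sumElim {X Y : Type} [Fintype X] [Fintype Y] {p : X → ℝ} {q : Y → ℝ} {l : ℝ}
    (hp : IsDist p) (hq : IsDist q) (hl0 : 0 ≤ l) (hl1 : l ≤ 1) :
    IsDist (Sum.elim (fun x => l * p x) (fun y => (1 - l) * q y)) := by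
  refine ⟨fun z => ?_, ?_⟩
  · cases z with
    | inl x => exact mul_nonneg hl0 (hp.1 x)
    | inr y => exact mul_nonneg (sub_nonneg.2 hl1) (hq.1 y)
  · rw [Fintype.sum_sum_type]
    simp only [Sum.elim_inl, Sum.elim_inr, ← mul_sum, hp.2, hq.2]
    ring

theorem isDist_uniform {n : ℕ} (hn : 1 ≤ n) : IsDist (fun _ : Fin n => (n : ℝ)⁻¹) := by
  refine ⟨fun _ => by positivity, ?_⟩
  rw [sum_const, card_univ, Fintype.card_fin, nsmul_eq_mul]
  exact mul_inv_cancel₀ (by positivity)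

theorem isDist_binary {t : ℝ} (ht : t ∈ Set.Icc (0 : ℝ) 1) :
    IsDist (fun b : Bool => if b then t else 1 - t) :=
  ⟨fun b => by cases b <;> simp [ht.1, ht.2], by simp⟩

theorem IsDist.eq_ite_of_apply_eq_one {X : Type} [Fintype X] [DecidableEq X] {p : X → ℝ}
    (hp : IsDist p) {x : X} (hx : p x = 1) : p = fun y => if y = x then 1 else 0 := by
  have hrest : ∑ y ∈ univ.erase x, p y = 0 := by
    linarith [add_sum_erase univ p (mem_univ x), hp.2]
  funext y
  split_ifs with hy
  · rw [hy, hx]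
  · exact (sum_eq_zero_iff_of_nonneg fun z _ => hp.1 z).1 hrest y (mem_erase.2 ⟨hy, mem_univ y⟩)

theorem sum_negMulLog_sumElim {X : Type} [Fintype X] {q : X → ℝ} (hq : ∑ x, q x = 1) (l : ℝ) :
    ∑ y, negMulLog (Sum.elim (fun x => l * q x) (fun _ : Unit => (1 - l) * 1) y) =
      l * ∑ x, negMulLog (q x) + binEntropy l := by
  simp only [Fintype.sum_sum_type, Sum.elim_inl, Sum.elim_inr, negMulLog_mul, sum_add_distrib,
    ← sum_mul, ← mul_sum, hq, univ_unique, sum_singleton, mul_one,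
    binEntropy_eq_negMulLog_add_negMulLog_one_sub]
  ring

namespace Faddeev

-- Passed to the predicates below, `S` is eta-expanded to `fun {X} [_] => S`, so unfolding them
-- leaves beta-redexes: hence the `beta_reduce`s.
variable (S : ∀ {X : Type} [Fintype X], (X → ℝ) → ℝ)

def IsContinuousOnDists : Prop :=
  ∀ (X : Type) [Fintype X], ContinuousOn (fun p : X → ℝ => S p) {p | IsDist p}

def SatisfiesMixing : Prop :=
  ∀ (X Y : Type) [Fintype X] [Fintype Y] (p : X → ℝ) (q : Y → ℝ) (l : ℝ),
    IsDist p → IsDist q → 0 ≤ l → l ≤ 1 →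
    S (Sum.elim (fun x => l * p x) (fun y => (1 - l) * q y)) =
      l * S p + (1 - l) * S q + S (fun b : Bool => if b then l else 1 - l)

def IsInvariantUnderBijections : Prop :=
  ∀ (X Y : Type) [Fintype X] [Fintype Y] (e : X ≃ Y) (p : X → ℝ), IsDist p → S (p ∘ e.symm) = S p

def VanishesOnPointMasses : Prop :=
  ∀ (X : Type) [Fintype X] [DecidableEq X] (x : X), S (fun y => if y = x then (1 : ℝ) else 0) = 0

def DecreasesUnderPushforward : Prop :=
  ∀ (X Y : Type) [Fintype X] [Fintype Y] (f : X → Y) (p : X → ℝ), IsDist p → S (pushfwd f p) ≤ S p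

noncomputable def uniformValue (n : ℕ) : ℝ := S (fun _ : Fin n => (n : ℝ)⁻¹)

noncomputable def binaryValue (t : ℝ) : ℝ := S (fun b : Bool => if b then t else 1 - t)

def EqMulEntropyOn (c : ℝ) (X : Type) [Fintype X] : Prop :=
  ∀ p : X → ℝ, IsDist p → S p = c * ∑ x, negMulLog (p x)

variable {S}

theorem apply_const_one_of_unique {X : Type} [Fintype X] [Unique X]
    (hpoint : VanishesOnPointMasses S) : S (fun _ : X => (1 : ℝ)) = 0 := by
  classical
  simpa [Unique.eq_default] using hpoint X default

theorem uniformValue_one (hpoint : VanishesOnPointMasses S) : uniformValue S 1 = 0 := by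
  simpa [uniformValue] using apply_const_one_of_unique (X := Fin 1) hpoint

theorem binaryValue_zero (hpoint : VanishesOnPointMasses S) : binaryValue S 0 = 0 := by
  unfold binaryValue
  convert hpoint Bool false using 2
  funext b
  cases b <;> simp

theorem binaryValue_one (hpoint : VanishesOnPointMasses S) : binaryValue S 1 = 0 := by
  unfold binaryValue
  convert hpoint Bool true using 2
  funext b
  cases b <;> simp

theorem uniformValue_add (hmix : SatisfiesMixing S) (hbij : IsInvariantUnderBijections S)
    {a b : ℕ} (ha : 1 ≤ a) (hb : 1 ≤ b) :
    uniformValue S (a + b) = a / (a + b) * uniformValue S a + b / (a + b) * uniformValue S b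
      + binaryValue S (a / (a + b)) := by
  have hab : (0 : ℝ) < a + b := by positivity
  have hl1 : (a : ℝ) / (a + b) ≤ 1 := (div_le_one hab).2 (by simp)
  have hsplit : Sum.elim (fun _ : Fin a => a / (a + b) * (a : ℝ)⁻¹)
      (fun _ : Fin b => (1 - a / (a + b)) * (b : ℝ)⁻¹) = fun _ => ((a + b : ℕ) : ℝ)⁻¹ := by
    have : (a : ℝ) ≠ 0 := by positivity
    have : (b : ℝ) ≠ 0 := by positivity
    funext z
    cases z <;> (simp only [Sum.elim_inl, Sum.elim_inr]; push_cast; field_simp; try ring)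
  have hdist := isDist_sumElim (isDist_uniform ha) (isDist_uniform hb) (by positivity) hl1
  have hmix' := hmix _ _ _ _ _ (isDist_uniform ha) (isDist_uniform hb) (by positivity) hl1
  rw [hsplit] at hdist hmix'
  have hbij' := hbij _ _ finSumFinEquiv _ hdist
  beta_reduce at hmix' hbij'
  have hb' : 1 - (a : ℝ) / (a + b) = b / (a + b) := by field_simp; ring
  calc uniformValue S (a + b) = S ((fun _ => ((a + b : ℕ) : ℝ)⁻¹) ∘ finSumFinEquiv.symm) := rfl
    _ = _ := by rw [hbij', hmix', ← hb']; rfl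

theorem uniformValue_recursion (hmix : SatisfiesMixing S) (hbij : IsInvariantUnderBijections S)
    (hpoint : VanishesOnPointMasses S) (n : ℕ) :
    ((n : ℝ) + 1) * uniformValue S (n + 1) =
      n * uniformValue S n + (n + 1) * binaryValue S (n / (n + 1)) := by
  rcases Nat.eq_zero_or_pos n with rfl | hn
  · simp [uniformValue_one hpoint, binaryValue_zero hpoint]
  · rw [uniformValue_add hmix hbij hn le_rfl, uniformValue_one hpoint]
    push_cast
    field_simp
    ring

theorem uniformValue_mul (hmix : SatisfiesMixing S) (hbij : IsInvariantUnderBijections S)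
    (hpoint : VanishesOnPointMasses S) {m n : ℕ} (hm : 1 ≤ m) (hn : 1 ≤ n) :
    uniformValue S (m * n) = uniformValue S m + uniformValue S n := by
  induction m, hm using Nat.le_induction with
  | base => rw [one_mul, uniformValue_one hpoint, zero_add]
  | succ m hm ih =>
    have hratio : ((m * n : ℕ) : ℝ) / ((m * n : ℕ) + n) = m / (m + 1) := by
      have : (n : ℝ) ≠ 0 := by positivity
      push_cast
      field_simp
    have hsucc := uniformValue_add hmix hbij hm le_rfl
    rw [add_mul, one_mul, uniformValue_add hmix hbij (Nat.one_le_iff_ne_zero.2 (by positivity)) hn,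
      hratio, ih, hsucc, uniformValue_one hpoint]
    have : (m : ℝ) + 1 ≠ 0 := by positivity
    push_cast
    field_simp
    ring

theorem continuousOn_binaryValue (hcont : IsContinuousOnDists S) :
    ContinuousOn (binaryValue S) (Set.Icc 0 1) :=
  (hcont Bool).comp (continuous_pi fun b => by cases b <;> simp <;> fun_prop).continuousOn
    fun _ ht => isDist_binary ht

theorem tendsto_binaryValue_natCast_div (hcont : IsContinuousOnDists S)
    (hpoint : VanishesOnPointMasses S) :
    Tendsto (fun n : ℕ => binaryValue S (n / (n + 1))) atTop (𝓝 0) := by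
  have hmem : ∀ n : ℕ, (n : ℝ) / (n + 1) ∈ Set.Icc (0 : ℝ) 1 := fun n =>
    ⟨by positivity, (div_le_one (by positivity)).2 (by linarith)⟩
  rw [← binaryValue_one hpoint]
  exact ((continuousOn_binaryValue hcont) 1 (by simp)).tendsto.comp
    (tendsto_nhdsWithin_iff.2 ⟨tendsto_natCast_div_add_atTop 1, .of_forall hmem⟩)

theorem uniformValue_eq_mul_log (hcont : IsContinuousOnDists S) (hmix : SatisfiesMixing S)
    (hbij : IsInvariantUnderBijections S) (hpoint : VanishesOnPointMasses S) {n : ℕ} (hn : 1 ≤ n) :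
    uniformValue S n = uniformValue S 2 / log 2 * log n :=
  eq_mul_log_of_map_mul_of_tendsto_sub (fun _ _ => uniformValue_mul hmix hbij hpoint)
    (tendsto_sub_of_succ_mul_eq (tendsto_binaryValue_natCast_div hcont hpoint)
      (uniformValue_recursion hmix hbij hpoint)) hn

theorem apply_nonneg (hmono : DecreasesUnderPushforward S) (hpoint : VanishesOnPointMasses S)
    {X : Type} [Fintype X] {p : X → ℝ} (hp : IsDist p) : 0 ≤ S p := by
  have hpush : pushfwd (fun _ => ()) p = fun _ => 1 := by
    funext
    simpa [pushfwd] using hp.2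
  simpa [hpush, apply_const_one_of_unique hpoint] using hmono X Unit (fun _ => ()) p hp

theorem binaryValue_natCast_div (hmix : SatisfiesMixing S) (hbij : IsInvariantUnderBijections S)
    {c : ℝ} (hU : ∀ n : ℕ, 1 ≤ n → uniformValue S n = c * log n) {a b : ℕ} (ha : 1 ≤ a)
    (hb : 1 ≤ b) : binaryValue S (a / (a + b)) = c * binEntropy (a / (a + b)) := by
  have ha' : (a : ℝ) ≠ 0 := by positivity
  have hb' : (b : ℝ) ≠ 0 := by positivity
  have hab : (a : ℝ) + b ≠ 0 := by positivity
  have h := uniformValue_add hmix hbij ha hb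
  rw [hU _ ha, hU _ hb, hU _ (by omega)] at h
  have h1 : 1 - (a : ℝ) / (a + b) = b / (a + b) := by field_simp; ring
  rw [binEntropy, h1, inv_div, inv_div, log_div hab ha', log_div hab hb']
  push_cast at h
  field_simp at h ⊢
  linear_combination -h

theorem exists_nat_eq_div_add_of_rat {q : ℚ} (hq : (q : ℝ) ∈ Set.Ioo 0 1) :
    ∃ a b : ℕ, 1 ≤ a ∧ 1 ≤ b ∧ (q : ℝ) = a / (a + b) := by
  have hq0 : 0 < q := by exact_mod_cast hq.1
  have hq1 : q < 1 := by exact_mod_cast hq.2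
  obtain ⟨a, ha⟩ := Int.eq_ofNat_of_zero_le (Rat.num_pos.2 hq0).le
  have ha1 : 1 ≤ a := by have := Rat.num_pos.2 hq0; omega
  have had : a < q.den := by have := Rat.num_lt_denom_iff.2 hq1; omega
  refine ⟨a, q.den - a, ha1, by omega, ?_⟩
  rw [Rat.cast_def, ha, Nat.cast_sub had.le]
  push_cast
  ring

theorem binaryValue_eq_mul_binEntropy (hcont : IsContinuousOnDists S)
    (hmix : SatisfiesMixing S) (hbij : IsInvariantUnderBijections S) {c : ℝ}
    (hU : ∀ n : ℕ, 1 ≤ n → uniformValue S n = c * log n) :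
    Set.EqOn (binaryValue S) (fun t => c * binEntropy t) (Set.Icc 0 1) := by
  refine Set.EqOn.of_subset_closure (s := Set.Ioo 0 1 ∩ Set.range ((↑) : ℚ → ℝ)) ?_
    (continuousOn_binaryValue hcont)
    (by fun_prop : Continuous fun t => c * binEntropy t).continuousOn
    (Set.inter_subset_left.trans Set.Ioo_subset_Icc_self) ?_
  · rintro _ ⟨ht, q, rfl⟩
    obtain ⟨a, b, ha, hb, hq⟩ := exists_nat_eq_div_add_of_rat ht
    rw [hq]
    exact binaryValue_natCast_div hmix hbij hU ha hb
  · rw [← closure_Ioo zero_ne_one]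
    exact closure_minimal (Rat.denseRange_cast.open_subset_closure_inter isOpen_Ioo)
      isClosed_closure

theorem EqMulEntropyOn.of_equiv (hbij : IsInvariantUnderBijections S) {c : ℝ} {X Y : Type}
    [Fintype X] [Fintype Y] (e : X ≃ Y) (hX : EqMulEntropyOn S c X) : EqMulEntropyOn S c Y := by
  intro p hp
  have hpe : IsDist (p ∘ e) := ⟨fun x => hp.1 (e x), (Equiv.sum_comp e p).trans hp.2⟩
  have h := hbij X Y e (p ∘ e) hpe
  rw [Function.comp_assoc, e.self_comp_symm, Function.comp_id] at h
  exact h.trans <| (hX _ hpe).trans <| congrArg (c * ·) (Equiv.sum_comp e (negMulLog ∘ p))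

theorem EqMulEntropyOn.sum_unit (hmix : SatisfiesMixing S) (hpoint : VanishesOnPointMasses S)
    {c : ℝ} (hH : Set.EqOn (binaryValue S) (fun t => c * binEntropy t) (Set.Icc 0 1)) {X : Type}
    [Fintype X] (hX : EqMulEntropyOn S c X) : EqMulEntropyOn S c (X ⊕ Unit) := by
  classical
  intro p hp
  beta_reduce
  set t := p (.inr ())
  have hsum : ∑ x, p (.inl x) + t = 1 := by simpa [Fintype.sum_sum_type] using hp.2
  have ht0 : 0 ≤ t := hp.1 _
  have hrest : 0 ≤ ∑ x, p (.inl x) := sum_nonneg fun x _ => hp.1 _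
  rcases (show t ≤ 1 by linarith).eq_or_lt with ht1 | ht1
  · have hmass := hpoint (X ⊕ Unit) (.inr ())
    beta_reduce at hmass
    rw [hp.eq_ite_of_apply_eq_one (x := .inr ()) ht1, hmass]
    simp [Fintype.sum_sum_type]
  set q := fun x => p (.inl x) / (1 - t)
  have hq : IsDist q := by
    refine ⟨fun x => div_nonneg (hp.1 _) (by linarith), ?_⟩
    rw [← sum_div, div_eq_one_iff_eq (by linarith)]
    linarith
  have hp' : p = Sum.elim (fun x => (1 - t) * q x) (fun _ : Unit => (1 - (1 - t)) * 1) := by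
    funext y
    rcases y with x | ⟨⟩
    · simp only [Sum.elim_inl, q]
      field_simp [(by linarith : 1 - t ≠ 0)]
    · simp [t]
  have hmix' := hmix X Unit q (fun _ => 1) (1 - t) hq
    ⟨fun _ => zero_le_one, by simp⟩ (by linarith) (by linarith)
  have hXq := hX q hq
  beta_reduce at hmix' hXq
  rw [hp', hmix', hXq, apply_const_one_of_unique hpoint, sum_negMulLog_sumElim hq.2,
    show S (fun b : Bool => if b then 1 - t else 1 - (1 - t)) = binaryValue S (1 - t) from rfl,
    hH ⟨by linarith, by linarith⟩]
  ring

theorem eqMulEntropyOn (hmix : SatisfiesMixing S) (hbij : IsInvariantUnderBijections S)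
    (hpoint : VanishesOnPointMasses S) {c : ℝ}
    (hH : Set.EqOn (binaryValue S) (fun t => c * binEntropy t) (Set.Icc 0 1)) (X : Type)
    [Fintype X] : EqMulEntropyOn S c X :=
  Fintype.induction_empty_option (P := fun X _ => EqMulEntropyOn S c X)
    (fun _ β _ e ih => letI := Fintype.ofEquiv β e.symm; ih.of_equiv hbij e)
    (fun _ hp => by simpa using hp.2)
    (fun α _ ih => (ih.sum_unit hmix hpoint hH).of_equiv hbij (Equiv.optionEquivSumPUnit α).symm)
    X

end Faddeev

open Faddeev in
/-- Faddeev/BFL characterization of Shannon entropy: a function S on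
probability distributions on finite sets that is (i) continuous on the distributions
over each fixed finite set, (ii) satisfies
S(λp ⊕ (1-λ)q) = λ S(p) + (1-λ) S(q) + S(λ, 1-λ), (iii) is invariant under bijections,
(iv) vanishes on point masses, and (v) satisfies S(p) ≥ S(f_* p) for every function f,
must be of the form S(p) = -c ∑_x p x log (p x) for some constant c ≥ 0. -/
theorem faddeev_BFL_characterization
    (S : ∀ {X : Type} [Fintype X], (X → ℝ) → ℝ)
    (hcont : ∀ (X : Type) [Fintype X],
      ContinuousOn (fun p : X → ℝ => S p) {p | IsDist p})
    (hmix : ∀ (X Y : Type) [Fintype X] [Fintype Y] (p : X → ℝ) (q : Y → ℝ)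
      (l : ℝ), IsDist p → IsDist q → 0 ≤ l → l ≤ 1 →
      S (Sum.elim (fun x => l * p x) (fun y => (1 - l) * q y)) =
        l * S p + (1 - l) * S q + S (fun b : Bool => if b then l else 1 - l))
    (hbij : ∀ (X Y : Type) [Fintype X] [Fintype Y] (e : X ≃ Y) (p : X → ℝ),
      IsDist p → S (p ∘ e.symm) = S p)
    (hpoint : ∀ (X : Type) [Fintype X] [DecidableEq X] (x : X),
      S (fun y => if y = x then (1 : ℝ) else 0) = 0)
    (hmono : ∀ (X Y : Type) [Fintype X] [Fintype Y] (f : X → Y) (p : X → ℝ),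
      IsDist p → S (pushfwd f p) ≤ S p) :
    ∃ c : ℝ, 0 ≤ c ∧ ∀ (X : Type) [Fintype X] (p : X → ℝ), IsDist p →
      S p = -c * ∑ x, p x * Real.log (p x) := by
  have hc : 0 ≤ uniformValue S 2 / log 2 :=
    div_nonneg (apply_nonneg hmono hpoint (isDist_uniform one_le_two)) (log_nonneg one_le_two)
  have hH := binaryValue_eq_mul_binEntropy hcont hmix hbij
    fun n hn => uniformValue_eq_mul_log hcont hmix hbij hpoint hn
  refine ⟨_, hc, fun X _ p hp => (eqMulEntropyOn hmix hbij hpoint hH X p hp).trans ?_⟩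
  simp only [negMulLog, neg_mul, sum_neg_distrib, mul_neg]
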